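/- arXiv:1409.4494 — 6 statements merged into one kernel-verified Lean document; each statement's English description precedes it below -/
import Mathlib

section
/- Let x ∈ ℝ and define the sequence (D_n)_{n≥0} by D_0 = 1, D_1 = 1 + x, and D_{n+1} = (x + n + 1) D_n − n x D_{n−1} for n ≥ 1. Then for every N ≥ 0, D_N = N! · Σ_{n=0}^{N} x^n/n!, i.e. D_N equals N! times the N-th partial sum of the exponential series at x. -/
/-!
Writing the recursion as `D (n+1) - (n+1) D n = x (D n - n D (n-1))` shows that
`D (n+1) - (n+1) D n = x ^ (n+1)`. The right-hand side `N! ∑_{n ≤ N} x^n/n!` obeys the same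
first-order recursion, with the same initial value `1`.
-/

open Finset Nat

theorem sub_mul_eq_pow_of_chalkerMehlig_rec {R : Type*} [CommRing R] (x : R) (D : ℕ → R)
    (h0 : D 0 = 1) (h1 : D 1 = 1 + x)
    (hrec : ∀ n : ℕ, 1 ≤ n → D (n + 1) = (x + n + 1) * D n - n * x * D (n - 1)) :
    ∀ n : ℕ, D (n + 1) - (n + 1) * D n = x ^ (n + 1) := by
  intro n
  induction n with
  | zero => simp [h0, h1]
  | succ n ih =>
    rw [hrec (n + 1) (Nat.le_add_left 1 n), Nat.add_sub_cancel, pow_succ, ← ih]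
    push_cast
    ring

theorem factorial_mul_sum_range_succ_pow_div_factorial {K : Type*} [Field K] [CharZero K]
    (x : K) (N : ℕ) :
    ((N + 1)! : K) * ∑ n ∈ range (N + 2), x ^ n / n ! =
      (N + 1) * ((N ! : K) * ∑ n ∈ range (N + 1), x ^ n / n !) + x ^ (N + 1) := by
  have hfact : ((N + 1)! : K) = (N + 1) * N ! := by push_cast [Nat.factorial_succ]; rfl
  rw [sum_range_succ _ (N + 1), mul_add, mul_div_cancel₀ _ (cast_ne_zero.mpr (factorial_ne_zero _)), hfact, mul_assoc]

theorem eq_factorial_mul_sum_range_pow_div_factorial {K : Type*} [Field K] [CharZero K]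
    (x : K) (D : ℕ → K) (h0 : D 0 = 1)
    (hstep : ∀ n : ℕ, D (n + 1) - (n + 1) * D n = x ^ (n + 1)) :
    ∀ N : ℕ, D N = (N ! : K) * ∑ n ∈ range (N + 1), x ^ n / n ! := by
  intro N
  induction N with
  | zero => simp [h0]
  | succ N ih =>
    rw [factorial_mul_sum_range_succ_pow_div_factorial, ← ih, ← hstep]
    ring

/-- Chalker–Mehlig recursion for the tridiagonal determinant `D_N(σ⁻², z)` (with
`x = σ⁻²|z|²`): its solution is `N!` times the `N`-th partial sum of the
exponential series at `x`. -/
theorem ginibre_D_recursion_solution (x : ℝ) (D : ℕ → ℝ)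
    (h0 : D 0 = 1) (h1 : D 1 = 1 + x)
    (hrec : ∀ n : ℕ, 1 ≤ n → D (n + 1) = (x + n + 1) * D n - n * x * D (n - 1)) :
    ∀ N : ℕ, D N = (Nat.factorial N : ℝ) * ∑ n ∈ Finset.range (N + 1),
      x ^ n / (Nat.factorial n : ℝ) :=
  eq_factorial_mul_sum_range_pow_div_factorial x D h0
    (sub_mul_eq_pow_of_chalkerMehlig_rec x D h0 h1 hrec)
end

section
/- Let x ∈ ℝ and define the sequence (G_n)_{n≥0} by G_0 = 1, G_1 = 2 + x, and G_{n+1} = (x + n + 2) G_n − n x G_{n−1} for n ≥ 1. Then for every N ≥ 1, G_{N−1} = (N−1)! · Σ_{n=0}^{N−1} (N − n) x^n/n!. -/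
/-! The solution is `G m = F (m + 1) - x * F m`, where `F m = m! * ∑_{k ≤ m} x^k / k!` obeys the
first-order recursion `F (m + 1) = (m + 1) * F m + x^(m + 1)`: substituted into the three-term
recursion for `G`, everything cancels by three instances of the first-order one. The closed form of
the statement equals `F (m + 1) - x * F m` because `∑ k x^k / k! = x * ∑ x^(k-1) / (k-1)!`. -/

open Finset Nat

section

variable {K : Type*} [Field K] [CharZero K]

noncomputable def factorialExpPartialSum (x : K) (m : ℕ) : K :=
  m ! * ∑ k ∈ range (m + 1), x ^ k / k !

theorem factorialExpPartialSum_zero (x : K) : factorialExpPartialSum x 0 = 1 := by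
  simp [factorialExpPartialSum]

theorem factorialExpPartialSum_succ (x : K) (m : ℕ) :
    factorialExpPartialSum x (m + 1) = (m + 1) * factorialExpPartialSum x m + x ^ (m + 1) := by
  have : ((m + 1)! : K) ≠ 0 := Nat.cast_ne_zero.mpr (factorial_ne_zero _)
  rw [factorialExpPartialSum, sum_range_succ, mul_add, mul_div_cancel₀ _ this,
    factorialExpPartialSum, factorial_succ]
  push_cast
  ring

theorem sum_range_succ_natCast_mul_pow_div_factorial (x : K) (m : ℕ) :
    ∑ k ∈ range (m + 1), (k : K) * x ^ k / k ! = x * ∑ k ∈ range m, x ^ k / k ! := by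
  rw [sum_range_succ', mul_sum]
  simp only [CharP.cast_eq_zero, zero_mul, zero_div, add_zero]
  refine sum_congr rfl fun k _ => ?_
  rw [factorial_succ]
  push_cast
  field_simp
  ring

theorem factorial_mul_sum_range_sub_mul_pow_div_factorial (x : K) (m : ℕ) :
    (m ! : K) * ∑ n ∈ range (m + 1), (((m + 1 : ℕ) : K) - n) * x ^ n / n ! =
      factorialExpPartialSum x (m + 1) - x * factorialExpPartialSum x m := by
  have hsum : ∑ n ∈ range (m + 1), (((m + 1 : ℕ) : K) - n) * x ^ n / n ! =
      (m + 1) * ∑ n ∈ range (m + 2), x ^ n / (n ! : K) -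
        x * ∑ n ∈ range (m + 1), x ^ n / n ! := by
    rw [← sum_range_succ_natCast_mul_pow_div_factorial, mul_sum, ← sum_sub_distrib,
      sum_range_succ _ (m + 1)]
    push_cast
    simp only [mul_div_assoc, sub_self, add_zero]
    refine sum_congr rfl fun n _ => ?_
    ring
  rw [hsum, factorialExpPartialSum, factorialExpPartialSum, factorial_succ]
  push_cast
  ring

end

section

variable {R : Type*} [CommRing R] {x : R} {F : ℕ → R}

theorem chalkerMehlig_recursion_sub_mul_succ
    (hF : ∀ m, F (m + 1) = (m + 1) * F m + x ^ (m + 1)) (n : ℕ) :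
    F (n + 3) - x * F (n + 2) =
      (x + n + 3) * (F (n + 2) - x * F (n + 1)) - (n + 1) * x * (F (n + 1) - x * F n) := by
  have h2 := hF (n + 2)
  have h1 := hF (n + 1)
  push_cast at h2 h1
  linear_combination h2 - (2 * x) * h1 + (x * x) * hF n

theorem eq_sub_of_chalkerMehlig_recursion {G : ℕ → R} (hF0 : F 0 = 1)
    (hF : ∀ m, F (m + 1) = (m + 1) * F m + x ^ (m + 1)) (h0 : G 0 = 1) (h1 : G 1 = 2 + x)
    (hrec : ∀ n : ℕ, 1 ≤ n → G (n + 1) = (x + n + 2) * G n - n * x * G (n - 1)) (m : ℕ) :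
    G m = F (m + 1) - x * F m := by
  induction m using Nat.twoStepInduction with
  | zero => simp [h0, hF 0, hF0]
  | one => linear_combination h1 - hF 1 + (x - 2) * hF 0 + (x - 2) * hF0
  | more n ihn ihn1 =>
    have hstep := hrec (n + 1) n.succ_pos
    push_cast at hstep
    rw [hstep, ihn1, ihn]
    linear_combination (chalkerMehlig_recursion_sub_mul_succ hF n).symm

end

/-- Chalker–Mehlig recursion for the tridiagonal determinant `G` arising in the
diagonal overlap density `O_N^{(1)}` of the complex Ginibre ensemble (with
`x = N|z|²`): the exact solution of the recursion. -/
theorem ginibre_G_recursion_solution (x : ℝ) (G : ℕ → ℝ)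
    (h0 : G 0 = 1) (h1 : G 1 = 2 + x)
    (hrec : ∀ n : ℕ, 1 ≤ n → G (n + 1) = (x + n + 2) * G n - n * x * G (n - 1)) :
    ∀ N : ℕ, 1 ≤ N → G (N - 1) = (Nat.factorial (N - 1) : ℝ) *
      ∑ n ∈ Finset.range N, ((N : ℝ) - n) * x ^ n / (Nat.factorial n : ℝ) := by
  intro N hN
  obtain ⟨m, rfl⟩ := Nat.exists_eq_add_of_le' hN
  rw [add_tsub_cancel_right, factorial_mul_sum_range_sub_mul_pow_div_factorial,
    eq_sub_of_chalkerMehlig_recursion (factorialExpPartialSum_zero x)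
      (factorialExpPartialSum_succ x) h0 h1 hrec]
end

section
/- For every fixed z ∈ ℂ with |z| < 1, lim_{N→∞} R_N(z) = π^{−1}. -/
open Filter

/-- The one-point eigenvalue density of the `N × N` complex Ginibre ensemble. -/
noncomputable def ginibreOnePoint (N : ℕ) (z : ℂ) : ℝ :=
  Real.pi⁻¹ * Real.exp (-(N * ‖z‖ ^ 2)) *
    ∑ n ∈ Finset.range N, (N * ‖z‖ ^ 2) ^ n / (Nat.factorial n : ℝ)

/-!
The density equals `π⁻¹ e^{-t} ∑_{n<N} tⁿ/n!` with `t = N|z|²`, so it suffices that the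
discarded tail `∑_{n≥N} tⁿ/n!` of the exponential series is `o(eᵗ)`. Past `n = N` consecutive
terms shrink by the factor `t/(n+1) ≤ r := |z|²`, so the tail is at most `tᴺ/N! · (1-r)⁻¹`, and
`e^{-t} tᴺ/N! ≤ (r e^{1-r})ᴺ` by `Nᴺ/N! ≤ eᴺ`. Finally `r e^{1-r} < 1` because `r < e^{r-1}`.
-/

open Real Nat Finset

lemma exp_sub_sum_range_le {t r : ℝ} {N : ℕ} (ht : 0 ≤ t) (hr : r < 1) (htr : t ≤ r * (N + 1)) :
    exp t - ∑ n ∈ range N, t ^ n / n ! ≤ t ^ N / N ! * (1 - r)⁻¹ := by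
  have hr0 : 0 ≤ r := nonneg_of_mul_nonneg_left (ht.trans htr) (by positivity)
  have htail : HasSum (fun k => t ^ (k + N) / (k + N)!) (exp t - ∑ n ∈ range N, t ^ n / n !) :=
    (hasSum_nat_add_iff' N).mpr (exp_eq_exp_ℝ ▸ NormedSpace.expSeries_div_hasSum_exp t)
  have hterm (k : ℕ) : t ^ (k + N) / (k + N)! ≤ t ^ N / N ! * r ^ k := by
    have hfac : (N ! * (N + 1) ^ k : ℝ) ≤ (k + N)! := by
      rw [add_comm k N]; exact_mod_cast factorial_mul_pow_le_factorial
    calc t ^ (k + N) / (k + N)! ≤ t ^ N * t ^ k / (N ! * (N + 1) ^ k) := by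
          rw [pow_add, mul_comm]; gcongr
      _ = t ^ N / N ! * (t / (N + 1)) ^ k := by rw [div_pow]; ring
      _ ≤ t ^ N / N ! * r ^ k := by
          gcongr; exact (div_le_iff₀ (by positivity)).mpr htr
  exact hasSum_le hterm htail ((hasSum_geometric_of_lt_one hr0 hr).mul_left _)

lemma exp_neg_mul_pow_div_factorial_le {r : ℝ} (hr : 0 ≤ r) (N : ℕ) :
    exp (-(N * r)) * ((N * r) ^ N / N !) ≤ (r * exp (1 - r)) ^ N := by
  calc exp (-(N * r)) * ((N * r) ^ N / N !)
      = exp (-(N * r)) * r ^ N * ((N : ℝ) ^ N / N !) := by ring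
    _ ≤ exp (-(N * r)) * r ^ N * exp N := by
        gcongr; exact pow_div_factorial_le_exp _ (by positivity) N
    _ = (r * exp (1 - r)) ^ N := by
        rw [mul_pow, ← exp_nat_mul, mul_right_comm, ← exp_add]; ring_nf

lemma mul_exp_one_sub_lt_one {r : ℝ} (hr : r ≠ 1) : r * exp (1 - r) < 1 := by
  have := add_one_lt_exp (sub_ne_zero.mpr hr)
  calc r * exp (1 - r) < exp (r - 1) * exp (1 - r) := by gcongr; linarith
    _ = 1 := by rw [← exp_add]; simp

lemma exp_neg_mul_sum_range_le_one {t : ℝ} (ht : 0 ≤ t) (N : ℕ) :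
    exp (-t) * ∑ n ∈ range N, t ^ n / n ! ≤ 1 := by
  calc exp (-t) * ∑ n ∈ range N, t ^ n / n ! ≤ exp (-t) * exp t := by
        gcongr; exact sum_le_exp_of_nonneg ht N
    _ = 1 := by rw [← exp_add]; simp

lemma tendsto_exp_neg_mul_sum_range {r : ℝ} (hr0 : 0 ≤ r) (hr1 : r < 1) :
    Tendsto (fun N : ℕ => exp (-(N * r)) * ∑ n ∈ range N, (N * r) ^ n / n !) atTop (nhds 1) := by
  set q := r * exp (1 - r)
  have hlower (N : ℕ) :
      1 - (1 - r)⁻¹ * q ^ N ≤ exp (-(N * r)) * ∑ n ∈ range N, (N * r) ^ n / n ! := by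
    calc 1 - (1 - r)⁻¹ * q ^ N
        ≤ 1 - (1 - r)⁻¹ * (exp (-(N * r)) * ((N * r) ^ N / N !)) := by
          gcongr; exact exp_neg_mul_pow_div_factorial_le hr0 N
      _ = 1 - exp (-(N * r)) * ((N * r) ^ N / N ! * (1 - r)⁻¹) := by ring
      _ ≤ 1 - exp (-(N * r)) * (exp (N * r) - ∑ n ∈ range N, (N * r) ^ n / n !) := by
          gcongr; exact exp_sub_sum_range_le (by positivity) hr1 (by nlinarith)
      _ = exp (-(N * r)) * ∑ n ∈ range N, (N * r) ^ n / n ! := by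
          rw [mul_sub, ← exp_add]; simp
  have hq : Tendsto (fun N : ℕ => 1 - (1 - r)⁻¹ * q ^ N) atTop (nhds 1) := by
    simpa using tendsto_const_nhds.sub ((tendsto_pow_atTop_nhds_zero_of_lt_one (by positivity)
      (mul_exp_one_sub_lt_one hr1.ne)).const_mul (1 - r)⁻¹)
  exact tendsto_of_tendsto_of_tendsto_of_le_of_le hq tendsto_const_nhds hlower
    fun N => exp_neg_mul_sum_range_le_one (by positivity) N

/-- In the bulk `|z| < 1`, the Ginibre one-point density converges to `π⁻¹`. -/
theorem ginibre_onePoint_bulk_limit (z : ℂ) (hz : ‖z‖ < 1) :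
    Tendsto (fun N : ℕ => ginibreOnePoint N z) atTop (nhds Real.pi⁻¹) := by
  have hr1 : ‖z‖ ^ 2 < 1 := pow_lt_one₀ (norm_nonneg z) hz two_ne_zero
  simpa [ginibreOnePoint, mul_assoc] using
    (tendsto_exp_neg_mul_sum_range (sq_nonneg ‖z‖) hr1).const_mul π⁻¹
end

section
/- The measures N^{−1} O_N(z) d²z converge weakly to π^{−1}(1 − |z|²) 𝟙_{|z| ≤ 1} d²z: for every continuous compactly supported function f : ℂ → ℝ, lim_{N→∞} N^{−1} ∫_ℂ f(z) O_N(z) d²z = π^{−1} ∫_{|z| ≤ 1} f(z) (1 − |z|²) d²z, where d²z denotes Lebesgue measure on ℂ ≅ ℝ². -/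
open Filter MeasureTheory

/-- The Chalker–Mehlig diagonal overlap density of the `N × N` complex Ginibre
ensemble. -/
noncomputable def ginibreDiagOverlap (N : ℕ) (z : ℂ) : ℝ :=
  Real.pi⁻¹ * Real.exp (-(N * ‖z‖ ^ 2)) *
    ∑ n ∈ Finset.range N, ((N : ℝ) - n) * (N * ‖z‖ ^ 2) ^ n / (Nat.factorial n : ℝ)

/-!
With `t = N |z|²` and `X` a Poisson(`t`) variable, `π N⁻¹ O_N(z) = E (1 - X / N)₊`.
The variable `X / N` has mean `|z|²` and variance `|z|² / N`, so, `x ↦ (1 - x)₊` being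
1-Lipschitz, `π N⁻¹ O_N(z) → (1 - |z|²)₊` for every `z` (the circle `|z| = 1` included).
These values lie in `[0, 1]`, so dominated convergence against the compactly supported `f`
gives the limit.
-/

open Topology
open scoped Nat NNReal

/-- The Poisson(`t`) mass function, `Po(t).real {n}`, with a real parameter. -/
noncomputable def poissonWeight (t : ℝ) (n : ℕ) : ℝ := Real.exp (-t) * t ^ n / n !

namespace poissonWeight

lemma nonneg {t : ℝ} (ht : 0 ≤ t) (n : ℕ) : 0 ≤ poissonWeight t n := by
  unfold poissonWeight
  positivity

section Moments

variable (t : ℝ)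

lemma succ_mul (n : ℕ) : (n + 1 : ℝ) * poissonWeight t (n + 1) = t * poissonWeight t n := by
  simp only [poissonWeight, Nat.factorial_succ, Nat.cast_mul, pow_succ]
  field_simp
  push_cast
  ring

lemma hasSum : HasSum (poissonWeight t) 1 := by
  have h := (NormedSpace.expSeries_div_hasSum_exp t).mul_left (Real.exp (-t))
  rw [← Real.exp_eq_exp_ℝ, ← Real.exp_add, neg_add_cancel, Real.exp_zero] at h
  exact h.congr_fun fun n => by rw [poissonWeight, mul_div_assoc]

lemma hasSum_natCast_mul_of_hasSum {f : ℕ → ℝ} {a : ℝ}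
    (h : HasSum (fun n => f (n + 1) * poissonWeight t n) a) :
    HasSum (fun n : ℕ => n * f n * poissonWeight t n) (t * a) := by
  rw [← hasSum_nat_add_iff' 1, Finset.sum_range_one, Nat.cast_zero, zero_mul, zero_mul,
    sub_zero]
  refine (h.mul_left t).congr_fun fun n => ?_
  rw [mul_left_comm, ← succ_mul]
  push_cast
  ring

lemma hasSum_natCast_mul : HasSum (fun n : ℕ => n * poissonWeight t n) t := by
  have h := hasSum_natCast_mul_of_hasSum t (f := fun _ => 1)
    ((hasSum t).congr_fun fun n => one_mul _)
  rw [mul_one] at h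
  exact h.congr_fun fun n => by rw [mul_one]

lemma hasSum_natCast_sq_mul :
    HasSum (fun n : ℕ => (n : ℝ) ^ 2 * poissonWeight t n) (t ^ 2 + t) := by
  have h := hasSum_natCast_mul_of_hasSum t (f := fun n => (n : ℝ))
    (by simpa [add_mul] using (hasSum_natCast_mul t).add (hasSum t))
  rw [show t * (t + 1) = t ^ 2 + t by ring] at h
  exact h.congr_fun fun n => by ring

lemma hasSum_sub_sq_mul : HasSum (fun n : ℕ => (n - t) ^ 2 * poissonWeight t n) t := by
  have h := ((hasSum_natCast_sq_mul t).sub ((hasSum_natCast_mul t).mul_left (2 * t))).add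
    ((hasSum t).mul_left (t ^ 2))
  rw [show t ^ 2 + t - 2 * t * t + t ^ 2 * 1 = t by ring] at h
  exact h.congr_fun fun n => by ring

end Moments

lemma abs_tsum_mul_le {t : ℝ} (ht : 0 ≤ t) {a : ℕ → ℝ} (ha : ∀ n, |a n| ≤ 1) :
    |∑' n, a n * poissonWeight t n| ≤ 1 := by
  rw [← Real.norm_eq_abs]
  refine tsum_of_norm_bounded (hasSum t) fun n => ?_
  rw [norm_mul, Real.norm_of_nonneg (nonneg ht n)]
  exact mul_le_of_le_one_left (nonneg ht n) (ha n)

end poissonWeight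

lemma abs_le_add_sq_div {y δ : ℝ} (hδ : 0 < δ) : |y| ≤ δ + y ^ 2 / δ := by
  rw [← sq_abs, ← sub_nonneg]
  have : δ + |y| ^ 2 / δ - |y| = ((|y| - δ) ^ 2 + δ * |y|) / δ := by
    field_simp
    ring
  rw [this]
  have := abs_nonneg y
  positivity

theorem abs_tsum_mul_sub_le_of_lipschitzWith {ι : Type*} {g : ℝ → ℝ} {K : ℝ≥0}
    (hg : LipschitzWith K g) {p x : ι → ℝ} {m v δ : ℝ} (hp₀ : ∀ i, 0 ≤ p i) (hp : HasSum p 1)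
    (hv : HasSum (fun i => (x i - m) ^ 2 * p i) v) (hδ : 0 < δ) :
    |∑' i, g (x i) * p i - g m| ≤ K * (δ + v / δ) := by
  have hbound : HasSum (fun i => K * (δ + (x i - m) ^ 2 / δ) * p i) (K * (δ + v / δ)) := by
    have h := ((hp.mul_left δ).add (hv.div_const δ)).mul_left (K : ℝ)
    rw [mul_one] at h
    exact h.congr_fun fun i => by ring
  have hle : ∀ i, ‖(g (x i) - g m) * p i‖ ≤ K * (δ + (x i - m) ^ 2 / δ) * p i := by
    intro i
    rw [norm_mul, Real.norm_of_nonneg (hp₀ i), ← dist_eq_norm]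
    refine mul_le_mul_of_nonneg_right ?_ (hp₀ i)
    calc dist (g (x i)) (g m) ≤ K * |x i - m| := hg.dist_le_mul _ _
      _ ≤ K * (δ + (x i - m) ^ 2 / δ) := by gcongr; exact abs_le_add_sq_div hδ
  obtain ⟨s, hs⟩ := Summable.of_norm_bounded hbound.summable hle
  have hsum : HasSum (fun i => g (x i) * p i) (s + g m) := by
    have h := hs.add (hp.mul_left (g m))
    rw [mul_one] at h
    exact h.congr_fun fun i => by ring
  rw [hsum.tsum_eq, add_sub_cancel_right, ← Real.norm_eq_abs]
  exact hs.norm_le_of_bounded hbound hle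

theorem tendsto_tsum_mul_poissonWeight_of_lipschitzWith {g : ℝ → ℝ} {K : ℝ≥0}
    (hg : LipschitzWith K g) {r : ℝ} (hr : 0 ≤ r) :
    Tendsto (fun N : ℕ => ∑' n : ℕ, g (n / N) * poissonWeight (N * r) n) atTop (𝓝 (g r)) := by
  have hvar : ∀ N : ℕ, N ≠ 0 →
      HasSum (fun n : ℕ => ((n : ℝ) / N - r) ^ 2 * poissonWeight (N * r) n) (r / N) := by
    intro N hN
    have h := (poissonWeight.hasSum_sub_sq_mul (N * r)).div_const ((N : ℝ) ^ 2)
    rw [show (N * r : ℝ) / N ^ 2 = r / N by field_simp] at h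
    exact h.congr_fun fun n => by field_simp
  have hdist : ∀ᶠ N : ℕ in atTop,
      ‖∑' n : ℕ, g (n / N) * poissonWeight (N * r) n - g r‖ ≤ K * (1 + r) / √N := by
    filter_upwards [eventually_ne_atTop 0] with N hN
    have h := abs_tsum_mul_sub_le_of_lipschitzWith hg
      (fun n => poissonWeight.nonneg (by positivity) n) (poissonWeight.hasSum _) (hvar N hN)
      (δ := (√N)⁻¹) (by positivity)
    have hsqrt : (√N : ℝ) ^ 2 = N := Real.sq_sqrt (Nat.cast_nonneg N)
    rw [Real.norm_eq_abs]
    convert h using 1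
    field_simp
    rw [hsqrt]
    ring
  rw [tendsto_iff_norm_sub_tendsto_zero]
  refine squeeze_zero' (.of_forall fun _ => norm_nonneg _) hdist ?_
  simpa [div_eq_mul_inv] using
    (Real.tendsto_sqrt_atTop.comp tendsto_natCast_atTop_atTop).inv_tendsto_atTop.const_mul
      ((K : ℝ) * (1 + r))

lemma inv_mul_ginibreDiagOverlap_eq_tsum {N : ℕ} (hN : N ≠ 0) (z : ℂ) :
    (N : ℝ)⁻¹ * ginibreDiagOverlap N z =
      Real.pi⁻¹ * ∑' n : ℕ, max (1 - (n : ℝ) / N) 0 * poissonWeight (N * ‖z‖ ^ 2) n := by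
  have hN' : (0 : ℝ) < N := by positivity
  rw [tsum_eq_sum (s := Finset.range N) fun n hn => ?vanish]
  case vanish =>
    have : (N : ℝ) ≤ n := by simpa using hn
    rw [max_eq_right (by rw [sub_nonpos, one_le_div hN']; exact this), zero_mul]
  simp only [ginibreDiagOverlap, poissonWeight, Finset.mul_sum]
  refine Finset.sum_congr rfl fun n hn => ?_
  have : (n : ℝ) ≤ N := by simpa using (Finset.mem_range.1 hn).le
  rw [max_eq_left (by rw [sub_nonneg, div_le_one hN']; exact this)]
  field_simp

lemma integral_mul_max_one_sub_sq_norm {E : Type*} [NormedAddCommGroup E] [MeasurableSpace E]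
    [OpensMeasurableSpace E] (μ : Measure E) (f : E → ℝ) :
    ∫ z, f z * max (1 - ‖z‖ ^ 2) 0 ∂μ = ∫ z in {z : E | ‖z‖ ≤ 1}, f z * (1 - ‖z‖ ^ 2) ∂μ := by
  rw [← integral_indicator (isClosed_le continuous_norm continuous_const).measurableSet]
  congr 1 with z
  by_cases hz : ‖z‖ ≤ 1
  · have : ‖z‖ ^ 2 ≤ 1 := pow_le_one₀ (norm_nonneg z) hz
    simp [Set.indicator_of_mem, hz, this]
  · have : 1 < ‖z‖ ^ 2 := one_lt_pow₀ (not_le.1 hz) two_ne_zero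
    simp [Set.indicator_of_notMem, hz, this.le]

/-- Weak convergence of `N⁻¹ O_N(z) d²z` to `π⁻¹ (1 - |z|²) 𝟙_{|z| ≤ 1} d²z`:
for every continuous compactly supported `f : ℂ → ℝ`,
`N⁻¹ ∫ f(z) O_N(z) d²z → π⁻¹ ∫_{|z| ≤ 1} f(z)(1 - |z|²) d²z`. -/
theorem ginibre_diagOverlap_weak_limit (f : ℂ → ℝ)
    (hf : Continuous f) (hsupp : HasCompactSupport f) :
    Tendsto (fun N : ℕ => (N : ℝ)⁻¹ * ∫ z : ℂ, f z * ginibreDiagOverlap N z)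
      atTop (nhds (Real.pi⁻¹ *
        ∫ z in {z : ℂ | ‖z‖ ≤ 1}, f z * (1 - ‖z‖ ^ 2))) := by
  set g : ℝ → ℝ := fun x => max (1 - x) 0
  have hg : LipschitzWith 1 g := LipschitzWith.of_dist_le_mul fun x y => by
    simpa [Real.dist_eq, abs_sub_comm] using abs_max_sub_max_le_abs (1 - x) (1 - y) 0
  have hF : ∀ᶠ N : ℕ in atTop, ∀ z, f z * ((N : ℝ)⁻¹ * ginibreDiagOverlap N z) =
      f z * (Real.pi⁻¹ * ∑' n : ℕ, g (n / N) * poissonWeight (N * ‖z‖ ^ 2) n) := by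
    filter_upwards [eventually_ne_atTop 0] with N hN z
    rw [inv_mul_ginibreDiagOverlap_eq_tsum hN]
  have hcont (N : ℕ) : Continuous fun z => f z * ((N : ℝ)⁻¹ * ginibreDiagOverlap N z) := by
    unfold ginibreDiagOverlap
    fun_prop
  have hbound : ∀ᶠ N : ℕ in atTop, ∀ z,
      ‖f z * ((N : ℝ)⁻¹ * ginibreDiagOverlap N z)‖ ≤ |f z| * Real.pi⁻¹ := by
    filter_upwards [hF] with N hN z
    rw [hN, norm_mul, norm_mul, Real.norm_eq_abs, Real.norm_of_nonneg (by positivity)]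
    gcongr
    refine mul_le_of_le_one_right (by positivity)
      (poissonWeight.abs_tsum_mul_le (by positivity) fun n => ?_)
    rw [abs_of_nonneg (le_max_right _ _)]
    exact max_le (by linarith [show 0 ≤ (n : ℝ) / N by positivity]) zero_le_one
  have hlim (z : ℂ) : Tendsto (fun N : ℕ => f z * ((N : ℝ)⁻¹ * ginibreDiagOverlap N z)) atTop
      (𝓝 (f z * (Real.pi⁻¹ * g (‖z‖ ^ 2)))) :=
    ((tendsto_tsum_mul_poissonWeight_of_lipschitzWith hg (by positivity)).const_mul _).const_mul _
      |>.congr' (hF.mono fun N hN => (hN z).symm)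
  have hdom := tendsto_integral_filter_of_dominated_convergence (μ := volume) _
    (.of_forall fun N => (hcont N).aestronglyMeasurable) (hbound.mono fun _ hN => .of_forall hN)
    ((hf.integrable_of_hasCompactSupport hsupp).abs.mul_const _) (.of_forall hlim)
  convert hdom using 2 with N
  · rw [← integral_const_mul]
    congr 1 with z
    ring
  · rw [← integral_mul_max_one_sub_sq_norm, ← integral_const_mul]
    congr 1 with z
    ring
end

section
/- For every real r with 0 ≤ r ≤ 1, lim_{N→∞} N^{−1} ln R_N(r) = 0, and for every real r > 1, lim_{N→∞} N^{−1} ln R_N(r) = 1 + ln(r²) − r², which is strictly negative (so R_N(r) is exponentially small in N for r > 1). -/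
/-! With `e_N(x) = ∑_{n<N} xⁿ / n!` we have `R_N(r) = π⁻¹ e^{-N r²} e_N(N r²)`, so it suffices
that `N⁻¹ log e_N(N t)` tends to `t` for `t ≤ 1` and to `1 + log t` for `t > 1`. The upper bounds
are the Chernoff bound `e_N(x) ≤ s⁻ᴺ e^{s x}` with `s = 1`, resp. `s = 1 / t`. For the lower bounds
keep only the term of index `min(⌈N t⌉, N) - 1` and bound its factorial by Stirling's formula. -/

open Filter

open Finset Real
open scoped Nat Topology

theorem log_factorial_le {n : ℕ} (hn : n ≠ 0) :
    log n ! ≤ n * log n - n + log n / 2 + 1 := by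
  have hn0 : (0 : ℝ) < n := by positivity
  have hseq : log (Stirling.stirlingSeq n) ≤ 1 - log 2 / 2 := by
    obtain ⟨m, rfl⟩ := Nat.exists_eq_succ_of_ne_zero hn
    have h := Stirling.stirlingSeq'_antitone (Nat.zero_le m)
    simp only [Function.comp_apply, Stirling.stirlingSeq_one] at h
    calc log (Stirling.stirlingSeq (m + 1)) ≤ log (exp 1 / √2) :=
          log_le_log (Stirling.stirlingSeq'_pos m) h
      _ = 1 - log 2 / 2 := by
          rw [log_div (exp_pos 1).ne' (by positivity), log_exp, log_sqrt zero_le_two]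
  rw [Stirling.log_stirlingSeq_formula, log_mul two_ne_zero hn0.ne',
    log_div hn0.ne' (exp_pos 1).ne', log_exp] at hseq
  linarith

theorem tendsto_inv_mul_log_natCast :
    Tendsto (fun N : ℕ => (N : ℝ)⁻¹ * log N) atTop (𝓝 0) := by
  have h := (tendsto_pow_log_div_mul_add_atTop 1 0 1 one_ne_zero).comp tendsto_natCast_atTop_atTop
  refine h.congr fun N => ?_
  simp [div_eq_inv_mul]

theorem tendsto_inv_mul_linear_add_log (a b c : ℝ) :
    Tendsto (fun N : ℕ => (N : ℝ)⁻¹ * (a * N + b + c * log N)) atTop (𝓝 a) := by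
  have h := (tendsto_const_nhds (x := a)).add
    (((tendsto_inv_atTop_nhds_zero_nat (𝕜 := ℝ)).const_mul b).add
      (tendsto_inv_mul_log_natCast.const_mul c))
  rw [mul_zero, mul_zero, add_zero, add_zero] at h
  refine h.congr' ?_
  filter_upwards [eventually_ne_atTop 0] with N hN
  field_simp
  ring

noncomputable def expPartialSum (N : ℕ) (x : ℝ) : ℝ :=
  ∑ n ∈ range N, x ^ n / n !

section ExpPartialSum

variable {N : ℕ} {x : ℝ}

theorem pow_div_factorial_le_expPartialSum {k : ℕ} (hk : k < N) (hx : 0 ≤ x) :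
    x ^ k / k ! ≤ expPartialSum N x :=
  single_le_sum (f := fun n => x ^ n / (n ! : ℝ)) (fun n _ => by positivity) (mem_range.2 hk)

theorem one_le_expPartialSum (hN : N ≠ 0) (hx : 0 ≤ x) : 1 ≤ expPartialSum N x := by
  simpa using pow_div_factorial_le_expPartialSum (Nat.pos_of_ne_zero hN) hx

theorem expPartialSum_le {s : ℝ} (hs0 : 0 < s) (hs1 : s ≤ 1) (hx : 0 ≤ x) :
    expPartialSum N x ≤ (s ^ N)⁻¹ * exp (s * x) := by
  calc expPartialSum N x ≤ ∑ n ∈ range N, (s ^ N)⁻¹ * ((s * x) ^ n / n !) := by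
        refine sum_le_sum fun n hn => ?_
        rw [mul_pow, mul_div_assoc, ← mul_assoc, ← div_eq_inv_mul]
        refine le_mul_of_one_le_left (by positivity) ?_
        rw [one_le_div (by positivity)]
        exact pow_le_pow_of_le_one hs0.le hs1 (mem_range.1 hn).le
    _ = (s ^ N)⁻¹ * expPartialSum N (s * x) := by rw [expPartialSum, mul_sum]
    _ ≤ (s ^ N)⁻¹ * exp (s * x) := by
        gcongr
        exact sum_le_exp_of_nonneg (by positivity) N

theorem log_expPartialSum_le (hN : N ≠ 0) {s : ℝ} (hs0 : 0 < s) (hs1 : s ≤ 1) (hx : 0 ≤ x) :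
    log (expPartialSum N x) ≤ s * x - N * log s := by
  have h := log_le_log (by linarith [one_le_expPartialSum hN hx]) (expPartialSum_le hs0 hs1 hx)
  rw [log_mul (by positivity) (exp_pos _).ne', log_inv, log_pow, log_exp] at h
  linarith

theorem log_expPartialSum_ge {k : ℕ} (hk : k < N) (hk0 : k ≠ 0) (hx : 0 < x) :
    k * (log x - log k + 1) - log k / 2 - 1 ≤ log (expPartialSum N x) := by
  have hterm : log (x ^ k / k !) ≤ log (expPartialSum N x) :=
    log_le_log (by positivity) (pow_div_factorial_le_expPartialSum hk hx.le)
  rw [log_div (by positivity) (by positivity), log_pow] at hterm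
  linarith [log_factorial_le hk0]

theorem log_expPartialSum_ge_of_le (hN : N ≠ 0) (hx0 : 0 ≤ x) (hxN : x ≤ N) :
    x - 2 - log N / 2 ≤ log (expPartialSum N x) := by
  have hlogN : 0 ≤ log N := log_natCast_nonneg N
  rcases le_or_gt x 1 with hx1 | hx1
  · linarith [log_nonneg (one_le_expPartialSum hN hx0)]
  set k := ⌈x⌉₊ - 1
  have hceil : 1 < ⌈x⌉₊ := Nat.lt_ceil.2 (by exact_mod_cast hx1)
  have hkx : (k : ℝ) < x := Nat.lt_ceil.1 (by omega)
  have hxk : x ≤ k + 1 := by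
    have := Nat.le_ceil x
    rwa [← Nat.cast_add_one, Nat.sub_add_cancel hceil.le]
  have hk0 : k ≠ 0 := by omega
  have hkN : k < N := by exact_mod_cast hkx.trans_le hxN
  have hlogk : log k ≤ log x := log_le_log (by positivity) hkx.le
  have hlogkN : log k ≤ log N := log_le_log (by positivity) (by exact_mod_cast hkN.le)
  have hgap : 0 ≤ k * (log x - log k) := mul_nonneg k.cast_nonneg (by linarith)
  have := log_expPartialSum_ge hkN hk0 (by linarith : 0 < x)
  linarith

theorem log_expPartialSum_natCast_mul_ge {t : ℝ} (hN : 2 ≤ N) (ht : 0 < t) :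
    (N - 1) * (log t + 1) - log N / 2 - 1 ≤ log (expPartialSum N (N * t)) := by
  have hN0 : (0 : ℝ) < N - 1 := by
    have : (2 : ℝ) ≤ N := by exact_mod_cast hN
    linarith
  have hcast : ((N - 1 : ℕ) : ℝ) = N - 1 := Nat.cast_pred (by omega)
  have h := log_expPartialSum_ge (N := N) (x := N * t) (k := N - 1) (by omega) (by omega)
    (by positivity)
  have hlog : log (N - 1 : ℝ) ≤ log N := log_le_log hN0 (by linarith)
  rw [hcast, log_mul (by positivity) ht.ne'] at h
  nlinarith [mul_le_mul_of_nonneg_left hlog hN0.le]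

end ExpPartialSum

theorem tendsto_inv_mul_log_expPartialSum_of_le_one {t : ℝ} (ht0 : 0 ≤ t) (ht1 : t ≤ 1) :
    Tendsto (fun N : ℕ => (N : ℝ)⁻¹ * log (expPartialSum N (N * t))) atTop (𝓝 t) := by
  refine tendsto_of_tendsto_of_tendsto_of_le_of_le'
    (tendsto_inv_mul_linear_add_log t (-2) (-1 / 2))
    (tendsto_inv_mul_linear_add_log t 0 0) ?_ ?_ <;>
    filter_upwards [eventually_ne_atTop 0] with N hN <;>
    refine mul_le_mul_of_nonneg_left ?_ (by positivity)
  · have := log_expPartialSum_ge_of_le hN (by positivity)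
      (mul_le_of_le_one_right N.cast_nonneg ht1)
    linarith
  · have := log_expPartialSum_le hN one_pos le_rfl (x := N * t) (by positivity)
    rw [log_one] at this
    linarith

theorem tendsto_inv_mul_log_expPartialSum_of_one_lt {t : ℝ} (ht : 1 < t) :
    Tendsto (fun N : ℕ => (N : ℝ)⁻¹ * log (expPartialSum N (N * t))) atTop
      (𝓝 (1 + log t)) := by
  refine tendsto_of_tendsto_of_tendsto_of_le_of_le'
    (tendsto_inv_mul_linear_add_log (1 + log t) (-(log t + 1) - 1) (-1 / 2))
    (tendsto_inv_mul_linear_add_log (1 + log t) 0 0) ?_ ?_ <;>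
    filter_upwards [eventually_ge_atTop 2] with N hN <;>
    refine mul_le_mul_of_nonneg_left ?_ (by positivity)
  · have := log_expPartialSum_natCast_mul_ge hN (by linarith : 0 < t)
    linarith
  · have := log_expPartialSum_le (N := N) (by omega) (inv_pos.2 (by linarith : 0 < t))
      (inv_le_one_of_one_le₀ ht.le) (x := N * t) (by positivity)
    have hscale : t⁻¹ * (N * t) = N := by field_simp
    rw [log_inv, hscale] at this
    linarith

theorem ginibreOnePoint_ofReal (N : ℕ) (r : ℝ) :
    ginibreOnePoint N r = π⁻¹ * exp (-(N * r ^ 2)) * expPartialSum N (N * r ^ 2) := by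
  simp only [ginibreOnePoint, expPartialSum, Complex.norm_real, norm_eq_abs, sq_abs]

theorem log_ginibreOnePoint_ofReal {N : ℕ} (hN : N ≠ 0) (r : ℝ) :
    log (ginibreOnePoint N r) = -log π - N * r ^ 2 + log (expPartialSum N (N * r ^ 2)) := by
  have hS := one_le_expPartialSum hN (x := N * r ^ 2) (by positivity)
  rw [ginibreOnePoint_ofReal, log_mul (by positivity) (by linarith),
    log_mul (by positivity) (exp_pos _).ne', log_inv, log_exp]
  ring

theorem tendsto_inv_mul_log_ginibreOnePoint {r L : ℝ}
    (h : Tendsto (fun N : ℕ => (N : ℝ)⁻¹ * log (expPartialSum N (N * r ^ 2))) atTop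
      (𝓝 L)) :
    Tendsto (fun N : ℕ => (N : ℝ)⁻¹ * log (ginibreOnePoint N r)) atTop
      (𝓝 (L - r ^ 2)) := by
  have hlim := (((tendsto_inv_atTop_nhds_zero_nat (𝕜 := ℝ)).mul_const (-log π)).sub_const
    (r ^ 2)).add h
  rw [zero_mul, zero_sub, neg_add_eq_sub] at hlim
  refine hlim.congr' ?_
  filter_upwards [eventually_ne_atTop 0] with N hN
  rw [log_ginibreOnePoint_ofReal hN]
  field_simp

/-- Exponential decay rate of the Ginibre one-point density: `N⁻¹ ln R_N(r) → 0`
for `0 ≤ r ≤ 1`, while `N⁻¹ ln R_N(r) → 1 + ln(r²) - r² < 0` for `r > 1`. -/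
theorem ginibre_onePoint_log_asymptotics :
    (∀ r : ℝ, 0 ≤ r → r ≤ 1 →
      Tendsto (fun N : ℕ => (N : ℝ)⁻¹ * Real.log (ginibreOnePoint N (r : ℂ)))
        atTop (nhds 0)) ∧
    (∀ r : ℝ, 1 < r →
      Tendsto (fun N : ℕ => (N : ℝ)⁻¹ * Real.log (ginibreOnePoint N (r : ℂ)))
        atTop (nhds (1 + Real.log (r ^ 2) - r ^ 2)) ∧
      1 + Real.log (r ^ 2) - r ^ 2 < 0) := by
  refine ⟨fun r hr0 hr1 => ?_, fun r hr => ?_⟩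
  · simpa using tendsto_inv_mul_log_ginibreOnePoint
      (tendsto_inv_mul_log_expPartialSum_of_le_one (sq_nonneg r) (pow_le_one₀ hr0 hr1))
  · have hr2 : 1 < r ^ 2 := one_lt_pow₀ hr two_ne_zero
    refine ⟨tendsto_inv_mul_log_ginibreOnePoint
      (tendsto_inv_mul_log_expPartialSum_of_one_lt hr2), ?_⟩
    linarith [log_lt_sub_one_of_pos (by positivity) hr2.ne']
end

section
/- For every fixed real r with 0 < r < 1, lim_{N→∞} ( Π_{n=0}^{N−2} λ_n^+ ) / ( e · r (1 − r²) · N^N e^{−N(1 − r²)} ) = 1; that is, the product of the leading eigenvalues satisfies Π_{n=0}^{N−2} λ_n^+ ∼ e · r(1 − r²) · exp( N ln N − N(1 − r²) ) as N → ∞. -/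
/-!
With `c = N r²`, `λ_n^+` is the larger root `L(c, n + 1)` of `(λ - c)(λ - x + 1) = λ`, and
`x ↦ (x - 1) log L - L + log (L - c)` is a primitive of `log L` (by that quadratic equation).
Since `(log L)'' = O(c^{-3/2})` uniformly in `x`, the midpoint rule replaces
`∑_{n < N - 1} log λ_n^+` by the primitive between `1/2` and `N - 1/2` up to
`O(N c^{-3/2}) → 0`. At the endpoints, `L(c, 1/2) - c → 1` and
`L(c, N - 1/2) - (N - 1/2) → r² / (1 - r²)`, which evaluates the primitive up to `o(1)`.
-/

open Filter

/-- The leading eigenvalue `λ_n^+` of the 2×2 transfer matrix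
`A_n = [[0, 1], [-N n r², N r² + n + 1]]` of the Chalker–Mehlig recursion. -/
noncomputable def lamPlus (r : ℝ) (N n : ℕ) : ℝ :=
  ((N : ℝ) / 2) * (r ^ 2 + ((n : ℝ) + 1) / N +
    Real.sqrt ((((n : ℝ) + 1) / N - r ^ 2) ^ 2 + 4 * r ^ 2 / N))

open Topology Real Finset

noncomputable section

def sqrtDisc (c x : ℝ) : ℝ := √((x - c) ^ 2 + 4 * c)

/-- The larger root of `(λ - c) (λ - x + 1) = λ`; `λ_n^+` is `topRoot (N r²) (n + 1)`. -/
def topRoot (c x : ℝ) : ℝ := (c + x + sqrtDisc c x) / 2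

def topRootDeriv (c x : ℝ) : ℝ := (1 + (x - c) / sqrtDisc c x) / 2

def primitiveLogTopRoot (c x : ℝ) : ℝ :=
  (x - 1) * log (topRoot c x) - topRoot c x + log (topRoot c x - c)

def logTopRootDeriv2Bound (c : ℝ) : ℝ := (4 * c * √c)⁻¹ + (c ^ 2)⁻¹

end

theorem lamPlus_eq_topRoot (r : ℝ) {N : ℕ} (hN : N ≠ 0) (n : ℕ) :
    lamPlus r N n = topRoot (N * r ^ 2) (n + 1) := by
  have hN0 : (0 : ℝ) < N := by positivity
  have hdisc : sqrtDisc (N * r ^ 2) (n + 1) =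
      N * √((((n : ℝ) + 1) / N - r ^ 2) ^ 2 + 4 * r ^ 2 / N) := by
    have h : ((n : ℝ) + 1 - N * r ^ 2) ^ 2 + 4 * (N * r ^ 2) =
        N ^ 2 * ((((n : ℝ) + 1) / N - r ^ 2) ^ 2 + 4 * r ^ 2 / N) := by
      field_simp
    rw [sqrtDisc, h, Real.sqrt_mul (sq_nonneg _), Real.sqrt_sq hN0.le]
  rw [lamPlus, topRoot, hdisc]
  field_simp

section Root

variable {c x : ℝ}

theorem sq_sqrtDisc (hc : 0 ≤ c) : sqrtDisc c x ^ 2 = (x - c) ^ 2 + 4 * c :=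
  Real.sq_sqrt (by positivity)

theorem abs_sub_lt_sqrtDisc (hc : 0 < c) : |x - c| < sqrtDisc c x := by
  rw [sqrtDisc, Real.lt_sqrt (abs_nonneg _), sq_abs]
  linarith

theorem sqrtDisc_pos (hc : 0 < c) : 0 < sqrtDisc c x :=
  (abs_nonneg _).trans_lt (abs_sub_lt_sqrtDisc hc)

theorem two_mul_sqrt_le_sqrtDisc : 2 * √c ≤ sqrtDisc c x := by
  rw [sqrtDisc, show 2 * √c = √(4 * c) by
    rw [Real.sqrt_mul (by norm_num), show (4 : ℝ) = 2 ^ 2 by norm_num, Real.sqrt_sq two_pos.le]]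
  exact Real.sqrt_le_sqrt (by nlinarith [sq_nonneg (x - c)])

theorem topRoot_sub_left_pos (hc : 0 < c) : 0 < topRoot c x - c := by
  have := abs_sub_lt_sqrtDisc (x := x) hc
  have := neg_abs_le (x - c)
  rw [topRoot]
  linarith

theorem le_topRoot (hc : 0 < c) : c ≤ topRoot c x :=
  (sub_pos.1 (topRoot_sub_left_pos hc)).le

theorem topRoot_pos (hc : 0 < c) : 0 < topRoot c x :=
  hc.trans_le (le_topRoot hc)

theorem topRoot_sub_mul_sub (hc : 0 ≤ c) :
    (topRoot c x - c) * (topRoot c x - x + 1) = topRoot c x := by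
  have := sq_sqrtDisc (x := x) hc
  rw [topRoot]
  linear_combination this / 4

theorem topRoot_sub_left_mul (hc : 0 ≤ c) :
    (topRoot c x - c) * (sqrtDisc c x + c - x) = 2 * c := by
  have := sq_sqrtDisc (x := x) hc
  rw [topRoot]
  linear_combination this / 2

theorem topRoot_sub_right_mul (hc : 0 ≤ c) :
    (topRoot c x - x) * (sqrtDisc c x + x - c) = 2 * c := by
  have := sq_sqrtDisc (x := x) hc
  rw [topRoot]
  linear_combination this / 2

theorem abs_topRootDeriv_le_one (hc : 0 < c) : |topRootDeriv c x| ≤ 1 := by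
  have hs := sqrtDisc_pos (x := x) hc
  have : |(x - c) / sqrtDisc c x| ≤ 1 := by
    rw [abs_div, abs_of_pos hs, div_le_one hs]
    exact (abs_sub_lt_sqrtDisc hc).le
  rw [topRootDeriv, abs_div, abs_two]
  linarith [abs_add_le 1 ((x - c) / sqrtDisc c x), abs_one (α := ℝ)]

theorem hasDerivAt_sqrtDisc (hc : 0 < c) :
    HasDerivAt (sqrtDisc c) ((x - c) / sqrtDisc c x) x := by
  have h : HasDerivAt (fun y ↦ (y - c) ^ 2 + 4 * c) (2 * (x - c)) x := by
    simpa using (((hasDerivAt_id' x).sub_const c).pow 2).add_const (4 * c)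
  refine (h.sqrt (by positivity)).congr_deriv ?_
  rw [← sqrtDisc]
  field_simp

theorem hasDerivAt_topRoot (hc : 0 < c) : HasDerivAt (topRoot c) (topRootDeriv c x) x :=
  (((hasDerivAt_id' x).const_add c).add (hasDerivAt_sqrtDisc hc)).div_const 2

theorem hasDerivAt_topRootDeriv (hc : 0 < c) :
    HasDerivAt (topRootDeriv c) (2 * c / sqrtDisc c x ^ 3) x := by
  have hs := sqrtDisc_pos (x := x) hc
  have h := ((((hasDerivAt_id' x).sub_const c).div (hasDerivAt_sqrtDisc hc) hs.ne').const_add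
    1).div_const 2
  refine h.congr_deriv ?_
  field_simp
  linear_combination sq_sqrtDisc (x := x) hc.le

theorem hasDerivAt_log_topRoot (hc : 0 < c) :
    HasDerivAt (fun y ↦ log (topRoot c y)) (topRootDeriv c x / topRoot c x) x :=
  (hasDerivAt_topRoot hc).log (topRoot_pos hc).ne'

theorem hasDerivAt_topRootDeriv_div_topRoot (hc : 0 < c) :
    HasDerivAt (fun y ↦ topRootDeriv c y / topRoot c y)
      ((2 * c / sqrtDisc c x ^ 3 * topRoot c x - topRootDeriv c x * topRootDeriv c x) /
        topRoot c x ^ 2) x :=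
  (hasDerivAt_topRootDeriv hc).div (hasDerivAt_topRoot hc) (topRoot_pos hc).ne'

theorem abs_deriv2_log_topRoot_le (hc : 0 < c) :
    |(2 * c / sqrtDisc c x ^ 3 * topRoot c x - topRootDeriv c x * topRootDeriv c x) /
      topRoot c x ^ 2| ≤ logTopRootDeriv2Bound c := by
  have hL := le_topRoot (x := x) hc
  have hL0 := topRoot_pos (x := x) hc
  have hs0 := sqrtDisc_pos (x := x) hc
  have hsc : 0 < √c := Real.sqrt_pos.2 hc
  have hs3 : 4 * c * √c ≤ sqrtDisc c x ^ 3 / 2 := by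
    have h := pow_le_pow_left₀ (by positivity) (two_mul_sqrt_le_sqrtDisc (c := c) (x := x)) 3
    nlinarith [Real.mul_self_sqrt hc.le]
  have hfirst : 2 * c / sqrtDisc c x ^ 3 * topRoot c x / topRoot c x ^ 2 ≤ (4 * c * √c)⁻¹ :=
    calc 2 * c / sqrtDisc c x ^ 3 * topRoot c x / topRoot c x ^ 2
        = (sqrtDisc c x ^ 3 / 2)⁻¹ * (c / topRoot c x) := by field_simp
      _ ≤ (4 * c * √c)⁻¹ * 1 := by
          gcongr
          exact div_le_one_of_le₀ hL hL0.le
      _ = (4 * c * √c)⁻¹ := mul_one _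
  have hsecond : topRootDeriv c x * topRootDeriv c x / topRoot c x ^ 2 ≤ (c ^ 2)⁻¹ := by
    have hL' : topRootDeriv c x * topRootDeriv c x ≤ 1 := by
      rw [← abs_mul_abs_self]
      have := abs_topRootDeriv_le_one (x := x) hc
      nlinarith [abs_nonneg (topRootDeriv c x)]
    rw [div_eq_mul_inv, ← one_mul (c ^ 2)⁻¹]
    gcongr
  rw [logTopRootDeriv2Bound, sub_div]
  refine (abs_sub _ _).trans (le_of_eq_of_le ?_ (add_le_add hfirst hsecond))
  have h2c : 0 ≤ 2 * c := by linarith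
  rw [abs_of_nonneg (div_nonneg (mul_nonneg (div_nonneg h2c (pow_pos hs0 3).le) hL0.le)
    (sq_nonneg _)), abs_of_nonneg (div_nonneg (mul_self_nonneg _) (sq_nonneg _))]

theorem hasDerivAt_primitiveLogTopRoot (hc : 0 < c) :
    HasDerivAt (primitiveLogTopRoot c) (log (topRoot c x)) x := by
  have hL := topRoot_pos (x := x) hc
  have hLc := topRoot_sub_left_pos (x := x) hc
  have h := ((((hasDerivAt_id' x).sub_const 1).mul (hasDerivAt_log_topRoot hc)).sub
    (hasDerivAt_topRoot hc)).add (((hasDerivAt_topRoot hc).sub_const c).log hLc.ne')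
  refine h.congr_deriv ?_
  field_simp
  linear_combination (-topRootDeriv c x) * topRoot_sub_mul_sub (x := x) hc.le

end Root

section Midpoint

variable {F f f' f'' : ℝ → ℝ} {M : ℝ}

theorem abs_mem_uIcc_zero_le {s t : ℝ} (hs : s ∈ Set.uIcc 0 t) : |s| ≤ |t| := by
  simpa using Set.abs_sub_left_of_mem_uIcc hs

theorem abs_add_sub_two_mul_le (hf : ∀ x, HasDerivAt f (f' x) x)
    (hf' : ∀ x, HasDerivAt f' (f'' x) x) (hM : ∀ x, |f'' x| ≤ M) (m t : ℝ) :
    |f (m + t) + f (m - t) - 2 * f m| ≤ 2 * M * t ^ 2 := by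
  have hf'_lip : ∀ y z, |f' y - f' z| ≤ M * |y - z| := fun y z ↦
    Convex.norm_image_sub_le_of_norm_hasDerivWithin_le (fun x _ ↦ (hf' x).hasDerivWithinAt)
      (fun x _ ↦ hM x) convex_univ (Set.mem_univ z) (Set.mem_univ y)
  have hderiv : ∀ s ∈ Set.uIcc 0 t, HasDerivWithinAt (fun s ↦ f (m + s) + f (m - s))
      (f' (m + s) - f' (m - s)) (Set.uIcc 0 t) s := fun s _ ↦
    (((hf _).comp_const_add m s).add ((hf _).comp_const_sub m s)).hasDerivWithinAt
  have hbound : ∀ s ∈ Set.uIcc 0 t, ‖f' (m + s) - f' (m - s)‖ ≤ 2 * M * |t| := fun s hs ↦ by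
    have hM0 : 0 ≤ M := (abs_nonneg _).trans (hM 0)
    calc ‖f' (m + s) - f' (m - s)‖ ≤ M * |(m + s) - (m - s)| := hf'_lip _ _
      _ = 2 * M * |s| := by rw [show m + s - (m - s) = 2 * s by ring, abs_mul, abs_two]; ring
      _ ≤ 2 * M * |t| := mul_le_mul_of_nonneg_left (abs_mem_uIcc_zero_le hs) (by positivity)
  have := Convex.norm_image_sub_le_of_norm_hasDerivWithin_le hderiv hbound (convex_uIcc 0 t)
    Set.left_mem_uIcc Set.right_mem_uIcc
  simp only [add_zero, sub_zero, Real.norm_eq_abs] at this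
  calc |f (m + t) + f (m - t) - 2 * f m| = |f (m + t) + f (m - t) - (f m + f m)| := by ring_nf
    _ ≤ 2 * M * |t| * |t| := this
    _ = 2 * M * t ^ 2 := by rw [mul_assoc, abs_mul_abs_self, sq]

theorem abs_sub_sub_two_mul_le (hF : ∀ x, HasDerivAt F (f x) x)
    (hf : ∀ x, HasDerivAt f (f' x) x) (hf' : ∀ x, HasDerivAt f' (f'' x) x)
    (hM : ∀ x, |f'' x| ≤ M) (m t : ℝ) :
    |F (m + t) - F (m - t) - 2 * t * f m| ≤ 2 * M * |t| ^ 3 := by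
  have hderiv : ∀ s ∈ Set.uIcc 0 t, HasDerivWithinAt (fun s ↦ F (m + s) - F (m - s) - 2 * s * f m)
      (f (m + s) + f (m - s) - 2 * f m) (Set.uIcc 0 t) s := fun s _ ↦ by
    have h := (((hF _).comp_const_add m s).sub ((hF _).comp_const_sub m s)).sub
      (((hasDerivAt_id' s).const_mul 2).mul_const (f m))
    exact (h.congr_deriv (by ring)).hasDerivWithinAt
  have hbound : ∀ s ∈ Set.uIcc 0 t, ‖f (m + s) + f (m - s) - 2 * f m‖ ≤ 2 * M * t ^ 2 :=
    fun s hs ↦ by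
      have hM0 : 0 ≤ M := (abs_nonneg _).trans (hM 0)
      refine (abs_add_sub_two_mul_le hf hf' hM m s).trans ?_
      rw [← sq_abs s, ← sq_abs t]
      exact mul_le_mul_of_nonneg_left
        (pow_le_pow_left₀ (abs_nonneg s) (abs_mem_uIcc_zero_le hs) 2) (by positivity)
  have := Convex.norm_image_sub_le_of_norm_hasDerivWithin_le hderiv hbound (convex_uIcc 0 t)
    Set.left_mem_uIcc Set.right_mem_uIcc
  simp only [add_zero, sub_zero, mul_zero, zero_mul, sub_self, Real.norm_eq_abs] at this
  calc |F (m + t) - F (m - t) - 2 * t * f m| ≤ 2 * M * t ^ 2 * |t| := this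
    _ = 2 * M * |t| ^ 3 := by rw [← sq_abs]; ring

theorem abs_sum_midpoint_sub_le (hF : ∀ x, HasDerivAt F (f x) x)
    (hf : ∀ x, HasDerivAt f (f' x) x) (hf' : ∀ x, HasDerivAt f' (f'' x) x)
    (hM : ∀ x, |f'' x| ≤ M) (n : ℕ) :
    |∑ k ∈ range n, f (k + 1) - (F (n + 1 / 2) - F (1 / 2))| ≤ n * (M / 4) := by
  have hcell : ∀ k : ℕ, |f (k + 1) - (F ((k + 1 : ℕ) + 1 / 2) - F (k + 1 / 2))| ≤ M / 4 := by
    intro k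
    calc |f (k + 1) - (F ((k + 1 : ℕ) + 1 / 2) - F (k + 1 / 2))|
        = |F ((k + 1) + 1 / 2) - F ((k + 1) - 1 / 2) - 2 * (1 / 2) * f (k + 1)| := by
          rw [abs_sub_comm]; push_cast; ring_nf
      _ ≤ 2 * M * |1 / 2| ^ 3 := abs_sub_sub_two_mul_le hF hf hf' hM _ _
      _ = M / 4 := by norm_num; ring
  have htel := Finset.sum_range_sub (fun k : ℕ ↦ F ((k : ℝ) + 1 / 2)) n
  simp only [Nat.cast_zero, zero_add] at htel
  rw [← htel, ← Finset.sum_sub_distrib]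
  calc _ ≤ ∑ k ∈ range n, |f (k + 1) - (F ((k + 1 : ℕ) + 1 / 2) - F (k + 1 / 2))| :=
        Finset.abs_sum_le_sum_abs _ _
    _ ≤ ∑ _k ∈ range n, M / 4 := Finset.sum_le_sum fun k _ ↦ hcell k
    _ = n * (M / 4) := by rw [Finset.sum_const, Finset.card_range, nsmul_eq_mul]

end Midpoint

section Asymptotics

variable {c x : ℕ → ℝ} {γ ξ : ℝ}

theorem tendsto_natCast_mul_div_natCast (q : ℝ) :
    Tendsto (fun N : ℕ ↦ N * q / N) atTop (𝓝 q) :=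
  tendsto_const_nhds.congr' <| by
    filter_upwards [eventually_ne_atTop 0] with N hN
    field_simp

theorem tendsto_sqrtDisc_div_natCast (hc : Tendsto (fun N ↦ c N / N) atTop (𝓝 γ))
    (hx : Tendsto (fun N ↦ x N / N) atTop (𝓝 ξ)) :
    Tendsto (fun N ↦ sqrtDisc (c N) (x N) / N) atTop (𝓝 |ξ - γ|) := by
  have hlim : Tendsto (fun N : ℕ ↦ √((x N / N - c N / N) ^ 2 + 4 * (c N / N) * (1 / N)))
      atTop (𝓝 |ξ - γ|) := by
    have := (((hx.sub hc).pow 2).add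
      ((hc.const_mul 4).mul tendsto_one_div_atTop_nhds_zero_nat)).sqrt
    rwa [mul_zero, add_zero, Real.sqrt_sq_eq_abs] at this
  refine hlim.congr' ?_
  filter_upwards [eventually_ne_atTop 0] with N hN
  have h : (x N / N - c N / N) ^ 2 + 4 * (c N / N) * (1 / N) =
      ((x N - c N) ^ 2 + 4 * c N) / (N : ℝ) ^ 2 := by
    field_simp
  rw [h, Real.sqrt_div' _ (sq_nonneg _), Real.sqrt_sq (Nat.cast_nonneg N), sqrtDisc]

theorem tendsto_topRoot_sub_left (hc0 : ∀ N, 0 ≤ c N)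
    (hc : Tendsto (fun N ↦ c N / N) atTop (𝓝 γ)) (hx : Tendsto (fun N ↦ x N / N) atTop (𝓝 ξ))
    (hξγ : ξ < γ) : Tendsto (fun N ↦ topRoot (c N) (x N) - c N) atTop (𝓝 (γ / (γ - ξ))) := by
  have hD : Tendsto (fun N ↦ sqrtDisc (c N) (x N) / N + c N / N - x N / N) atTop
      (𝓝 (2 * (γ - ξ))) := by
    have := ((tendsto_sqrtDisc_div_natCast hc hx).add hc).sub hx
    rwa [abs_of_neg (sub_neg.2 hξγ), show -(ξ - γ) + γ - ξ = 2 * (γ - ξ) by ring] at this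
  have hlim := (hc.const_mul 2).div hD (by linarith)
  rw [mul_div_mul_left _ _ two_ne_zero] at hlim
  refine hlim.congr' ?_
  filter_upwards [eventually_ne_atTop 0, hD.eventually_ne (by linarith : 2 * (γ - ξ) ≠ 0)]
    with N hN hDN
  rw [Pi.div_apply, div_eq_iff hDN]
  field_simp
  linear_combination -topRoot_sub_left_mul (x := x N) (hc0 N)

theorem tendsto_topRoot_sub_right (hc0 : ∀ N, 0 ≤ c N)
    (hc : Tendsto (fun N ↦ c N / N) atTop (𝓝 γ)) (hx : Tendsto (fun N ↦ x N / N) atTop (𝓝 ξ))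
    (hγξ : γ < ξ) : Tendsto (fun N ↦ topRoot (c N) (x N) - x N) atTop (𝓝 (γ / (ξ - γ))) := by
  have hD : Tendsto (fun N ↦ sqrtDisc (c N) (x N) / N + x N / N - c N / N) atTop
      (𝓝 (2 * (ξ - γ))) := by
    have := ((tendsto_sqrtDisc_div_natCast hc hx).add hx).sub hc
    rwa [abs_of_pos (sub_pos.2 hγξ), show ξ - γ + ξ - γ = 2 * (ξ - γ) by ring] at this
  have hlim := (hc.const_mul 2).div hD (by linarith)
  rw [mul_div_mul_left _ _ two_ne_zero] at hlim
  refine hlim.congr' ?_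
  filter_upwards [eventually_ne_atTop 0, hD.eventually_ne (by linarith : 2 * (ξ - γ) ≠ 0)]
    with N hN hDN
  rw [Pi.div_apply, div_eq_iff hDN]
  field_simp
  linear_combination -topRoot_sub_right_mul (x := x N) (hc0 N)

end Asymptotics

section Endpoints

variable {q : ℝ}

theorem tendsto_primitiveLogTopRoot_half (hq : 0 < q) :
    Tendsto (fun N : ℕ ↦ primitiveLogTopRoot (N * q) (1 / 2) + (log (N * q) / 2 + N * q + 1))
      atTop (𝓝 0) := by
  have hc : Tendsto (fun N : ℕ ↦ (N : ℝ) * q) atTop atTop :=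
    tendsto_natCast_atTop_atTop.atTop_mul_const hq
  have hA : Tendsto (fun N : ℕ ↦ topRoot (N * q) (1 / 2) - N * q) atTop (𝓝 1) := by
    have := tendsto_topRoot_sub_left (x := fun _ ↦ 1 / 2) (fun N ↦ by positivity)
      (tendsto_natCast_mul_div_natCast q) (tendsto_const_div_atTop_nhds_zero_nat _) hq
    rwa [sub_zero, div_self hq.ne'] at this
  have hAc : Tendsto (fun N : ℕ ↦ topRoot (N * q) (1 / 2) / (N * q)) atTop (𝓝 1) := by
    have := tendsto_const_nhds (x := (1 : ℝ)) |>.add (hA.div_atTop hc)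
    rw [add_zero] at this
    refine this.congr' ?_
    filter_upwards [eventually_ne_atTop 0] with N hN
    field_simp [Nat.cast_ne_zero.2 hN, hq.ne']
    ring
  have hlim := ((hA.log one_ne_zero).sub (hA.sub_const 1)).sub
    ((hAc.log one_ne_zero).div_const 2)
  simp only [log_one, sub_self, zero_div] at hlim
  refine hlim.congr' ?_
  filter_upwards [hc.eventually_gt_atTop 0] with N hN
  rw [primitiveLogTopRoot, log_div (topRoot_pos hN).ne' hN.ne']
  ring

theorem tendsto_primitiveLogTopRoot_sub_half (hq0 : 0 < q) (hq1 : q < 1) :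
    Tendsto (fun N : ℕ ↦ primitiveLogTopRoot (N * q) (N - 1 / 2) -
      (N * log N - log N / 2 - N + log (1 - q))) atTop (𝓝 0) := by
  set L : ℕ → ℝ := fun N ↦ topRoot (N * q) (N - 1 / 2)
  have hN : Tendsto (fun N : ℕ ↦ (N : ℝ)) atTop atTop := tendsto_natCast_atTop_atTop
  have hxN : Tendsto (fun N : ℕ ↦ ((N : ℝ) - 1 / 2) / N) atTop (𝓝 1) := by
    have := tendsto_const_nhds (x := (1 : ℝ)) |>.sub (tendsto_const_div_atTop_nhds_zero_nat (1 / 2))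
    rw [sub_zero] at this
    refine this.congr' ?_
    filter_upwards [eventually_ne_atTop 0] with N hN
    field_simp
  have hLx : Tendsto (fun N ↦ L N - (N - 1 / 2)) atTop (𝓝 (q / (1 - q))) :=
    tendsto_topRoot_sub_right (fun N ↦ by positivity) (tendsto_natCast_mul_div_natCast q) hxN hq1
  have hw : Tendsto (fun N ↦ L N - N) atTop (𝓝 (q / (1 - q) - 1 / 2)) :=
    (hLx.sub_const (1 / 2)).congr fun N ↦ by ring
  have hwN : Tendsto (fun N ↦ (L N - N) / N) atTop (𝓝 0) := hw.div_atTop hN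
  have hLN : Tendsto (fun N ↦ L N / N) atTop (𝓝 1) := by
    have := tendsto_const_nhds (x := (1 : ℝ)) |>.add hwN
    rw [add_zero] at this
    refine this.congr' ?_
    filter_upwards [eventually_ne_atTop 0] with N hN
    field_simp
    ring
  have hNlog : Tendsto (fun N : ℕ ↦ N * log (1 + (L N - N) / N)) atTop
      (𝓝 (q / (1 - q) - 1 / 2)) := by
    refine Real.tendsto_nat_mul_log_one_add_of_tendsto (hw.congr' ?_)
    filter_upwards [eventually_ne_atTop 0] with N hN
    field_simp
  have hLc : Tendsto (fun N ↦ (L N - N * q) / N) atTop (𝓝 (1 - q)) := by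
    have := ((hLx.div_atTop hN).add hxN).sub (tendsto_natCast_mul_div_natCast q)
    rw [zero_add] at this
    refine this.congr' ?_
    filter_upwards [eventually_ne_atTop 0] with N hN
    field_simp
    ring
  have hlim := ((hNlog.sub hw).sub ((hLN.log one_ne_zero).const_mul (3 / 2))).add
    ((hLc.log (by linarith)).sub_const (log (1 - q)))
  simp only [sub_self, log_one, mul_zero, add_zero] at hlim
  refine hlim.congr' ?_
  filter_upwards [eventually_ne_atTop 0] with N hN
  have hN0 : (0 : ℝ) < N := by positivity
  have hc : 0 < (N : ℝ) * q := by positivity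
  rw [show 1 + (L N - N) / N = L N / N by field_simp; ring,
    log_div (topRoot_pos hc).ne' hN0.ne', log_div (topRoot_sub_left_pos hc).ne' hN0.ne',
    primitiveLogTopRoot]
  ring

end Endpoints

theorem tendsto_mul_logTopRootDeriv2Bound :
    Tendsto (fun c ↦ c * logTopRootDeriv2Bound c) atTop (𝓝 0) := by
  have h := ((tendsto_sqrt_atTop.const_mul_atTop four_pos).inv_tendsto_atTop).add
    tendsto_inv_atTop_zero
  rw [add_zero] at h
  refine h.congr' ?_
  filter_upwards [eventually_gt_atTop 0] with c hc
  have := Real.sqrt_pos.2 hc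
  rw [Pi.inv_apply, logTopRootDeriv2Bound]
  field_simp

theorem tendsto_sum_log_topRoot_sub_primitive {q : ℝ} (hq : 0 < q) :
    Tendsto (fun N : ℕ ↦ ∑ k ∈ range (N - 1), log (topRoot (N * q) (k + 1)) -
      (primitiveLogTopRoot (N * q) (N - 1 / 2) - primitiveLogTopRoot (N * q) (1 / 2)))
      atTop (𝓝 0) := by
  have hc : Tendsto (fun N : ℕ ↦ (N : ℝ) * q) atTop atTop :=
    tendsto_natCast_atTop_atTop.atTop_mul_const hq
  have hlim : Tendsto (fun N : ℕ ↦ N * (logTopRootDeriv2Bound (N * q) / 4)) atTop (𝓝 0) := by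
    have := (tendsto_mul_logTopRootDeriv2Bound.comp hc).const_mul (q⁻¹ / 4)
    rw [mul_zero] at this
    refine this.congr' ?_
    filter_upwards [eventually_ne_atTop 0] with N hN
    simp only [Function.comp_apply]
    field_simp
  refine squeeze_zero_norm' ?_ hlim
  filter_upwards [eventually_ge_atTop 1] with N hN
  have hc : 0 < (N : ℝ) * q := by positivity
  have h := abs_sum_midpoint_sub_le (fun _ ↦ hasDerivAt_primitiveLogTopRoot hc)
    (fun _ ↦ hasDerivAt_log_topRoot hc) (fun _ ↦ hasDerivAt_topRootDeriv_div_topRoot hc)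
    (fun _ ↦ abs_deriv2_log_topRoot_le hc) (N - 1)
  rw [Nat.cast_sub hN, Nat.cast_one, show (N : ℝ) - 1 + 1 / 2 = N - 1 / 2 by ring] at h
  have hB : 0 ≤ logTopRootDeriv2Bound (N * q) / 4 :=
    div_nonneg ((abs_nonneg _).trans (abs_deriv2_log_topRoot_le (x := 0) hc)) zero_le_four
  rw [Real.norm_eq_abs]
  exact h.trans (mul_le_mul_of_nonneg_right (by linarith) hB)

/-- Asymptotics of the product of leading transfer-matrix eigenvalues:
`Π_{n=0}^{N-2} λ_n^+ ∼ e · r(1 - r²) · N^N e^{-N(1 - r²)}` as `N → ∞`,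
for fixed `0 < r < 1`. -/
theorem ginibre_transfer_eigenvalue_product_asymptotics (r : ℝ)
    (hr0 : 0 < r) (hr1 : r < 1) :
    Tendsto (fun N : ℕ =>
        (∏ n ∈ Finset.range (N - 1), lamPlus r N n) /
          (Real.exp 1 * r * (1 - r ^ 2) * (N : ℝ) ^ N *
            Real.exp (-(N * (1 - r ^ 2)))))
      atTop (nhds 1) := by
  have hq0 : 0 < r ^ 2 := by positivity
  have hq1 : 0 < 1 - r ^ 2 := by nlinarith
  have hlog := ((tendsto_sum_log_topRoot_sub_primitive hq0).add
    (tendsto_primitiveLogTopRoot_sub_half hq0 (by linarith))).sub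
    (tendsto_primitiveLogTopRoot_half hq0)
  rw [add_zero, sub_zero] at hlog
  have hexp := (continuous_exp.tendsto 0).comp hlog
  rw [exp_zero] at hexp
  refine hexp.congr' ?_
  filter_upwards [eventually_ne_atTop 0] with N hN
  have hN0 : (0 : ℝ) < N := by positivity
  have hc : 0 < (N : ℝ) * r ^ 2 := by positivity
  calc _ = exp (∑ k ∈ range (N - 1), log (topRoot (N * r ^ 2) (k + 1))) /
        exp (1 + log r + log (1 - r ^ 2) + N * log N - N * (1 - r ^ 2)) := by
        rw [Function.comp_apply, ← exp_sub, log_mul hN0.ne' hq0.ne', log_pow]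
        congr 1
        push_cast
        ring
    _ = _ := by
        rw [exp_sum, sub_eq_add_neg, exp_add, exp_add, exp_add, exp_add, exp_log hr0,
          exp_log hq1, ← log_pow, exp_log (by positivity)]
        congr 1
        exact Finset.prod_congr rfl fun n _ ↦ by
          rw [exp_log (topRoot_pos hc), lamPlus_eq_topRoot r hN]
end
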